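/- arXiv:2403.09618 — 5 statements merged into one kernel-verified Lean document; each statement's English description precedes it below -/
import Mathlib

section
/- Let A be an n×n real matrix with eigenvalue λ ≠ 0 and let β = λ²/4. Then every eigenvector of the augmented matrix A_β = [[A, -βI],[I, 0]] corresponding to the eigenvalue μ = λ/2 has the form ((λ/2)v, v) where v is an eigenvector of A with eigenvalue λ. In particular, the geometric multiplicity of μ = λ/2 for A_β equals the geometric multiplicity of λ for A. -/
open Matrix

lemma key_aux (n : ℕ) (A : Matrix (Fin n) (Fin n) ℝ) (lam : ℝ) (hlam : lam ≠ 0)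
    (β : ℝ) (hβ : β = lam ^ 2 / 4) (u v : Fin n → ℝ)
    (h : (Matrix.fromBlocks A (-β • 1) 1 0).mulVec (Sum.elim u v)
      = (lam / 2) • Sum.elim u v) :
    u = (lam / 2) • v ∧ A.mulVec v = lam • v := by
  rw [Matrix.fromBlocks_mulVec] at h
  have h1 : A.mulVec u + (-β • (1 : Matrix (Fin n) (Fin n) ℝ)).mulVec v = (lam / 2) • u := by
    funext i
    have := congrFun h (Sum.inl i)
    simpa using this
  have h2 : u = (lam / 2) • v := by
    funext i
    have := congrFun h (Sum.inr i)
    simpa using this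
  refine ⟨h2, ?_⟩
  rw [h2] at h1
  rw [Matrix.mulVec_smul, Matrix.smul_mulVec, Matrix.one_mulVec, smul_smul] at h1
  have h3 : (lam / 2) • A.mulVec v = (lam / 2 * (lam / 2) + β) • v := by
    rw [add_smul]
    linear_combination (norm := module) h1
  have h4 : (lam / 2) • A.mulVec v = (lam / 2) • (lam • v) := by
    rw [h3, smul_smul]
    congr 1
    rw [hβ]; ring
  have hl2 : lam / 2 ≠ 0 := by positivity
  exact smul_right_injective _ hl2 h4

theorem stmt1 (n : ℕ) (A : Matrix (Fin n) (Fin n) ℝ) (lam : ℝ) (hlam : lam ≠ 0)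
    (hlameig : ∃ w : Fin n → ℝ, w ≠ 0 ∧ A.mulVec w = lam • w)
    (β : ℝ) (hβ : β = lam ^ 2 / 4) :
    let Aβ : Matrix (Fin n ⊕ Fin n) (Fin n ⊕ Fin n) ℝ :=
      Matrix.fromBlocks A (-β • 1) 1 0
    (∀ u v : Fin n → ℝ,
        (Sum.elim u v ≠ 0) →
        Aβ.mulVec (Sum.elim u v) = (lam / 2) • Sum.elim u v →
        u = (lam / 2) • v ∧ v ≠ 0 ∧ A.mulVec v = lam • v) ∧
    Module.finrank ℝ
        (Module.End.eigenspace (Matrix.toLin' Aβ) (lam / 2)) =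
      Module.finrank ℝ (Module.End.eigenspace (Matrix.toLin' A) lam) := by
  intro Aβ
  constructor
  · intro u v hne h
    obtain ⟨h2, h3⟩ := key_aux n A lam hlam β hβ u v h
    refine ⟨h2, ?_, h3⟩
    intro hv
    apply hne
    subst hv
    rw [h2]
    funext i
    cases i <;> simp
  · -- build a linear equiv between the eigenspaces
    have memAβ : ∀ x : Fin n ⊕ Fin n → ℝ,
        x ∈ Module.End.eigenspace (Matrix.toLin' Aβ) (lam / 2) ↔
          Aβ.mulVec x = (lam / 2) • x := by
      intro x
      rw [Module.End.mem_eigenspace_iff]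
      simp [Matrix.toLin'_apply]
    have memA : ∀ x : Fin n → ℝ,
        x ∈ Module.End.eigenspace (Matrix.toLin' A) lam ↔
          A.mulVec x = lam • x := by
      intro x
      rw [Module.End.mem_eigenspace_iff]
      simp [Matrix.toLin'_apply]
    have hmem : ∀ v : Fin n → ℝ, A.mulVec v = lam • v →
        Aβ.mulVec (Sum.elim ((lam / 2) • v) v)
          = (lam / 2) • Sum.elim ((lam / 2) • v) v := by
      intro v hv
      show (Matrix.fromBlocks A (-β • 1) 1 0).mulVec _ = _
      rw [Matrix.fromBlocks_mulVec]
      simp only [Sum.elim_comp_inl, Sum.elim_comp_inr]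
      funext i
      cases i with
      | inl i =>
        simp only [Sum.elim_inl, Pi.add_apply, Pi.smul_apply]
        rw [Matrix.mulVec_smul, Matrix.smul_mulVec, Matrix.one_mulVec, hv]
        simp only [Pi.add_apply, Pi.smul_apply, Pi.neg_apply, smul_eq_mul]
        rw [hβ]; ring
      | inr i =>
        simp [Matrix.one_mulVec]
    let f : Module.End.eigenspace (Matrix.toLin' Aβ) (lam / 2) →ₗ[ℝ]
        Module.End.eigenspace (Matrix.toLin' A) lam :=
      { toFun := fun x => ⟨fun i => (x : Fin n ⊕ Fin n → ℝ) (Sum.inr i), by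
          rw [memA]
          exact (key_aux n A lam hlam β hβ
            (fun i => (x : Fin n ⊕ Fin n → ℝ) (Sum.inl i))
            (fun i => (x : Fin n ⊕ Fin n → ℝ) (Sum.inr i))
            (by
              have hx := (memAβ x).mp x.2
              have : Sum.elim (fun i => (x : Fin n ⊕ Fin n → ℝ) (Sum.inl i))
                  (fun i => (x : Fin n ⊕ Fin n → ℝ) (Sum.inr i)) = (x : Fin n ⊕ Fin n → ℝ) := by
                funext i; cases i <;> rfl
              rw [this]
              exact hx)).2⟩
        map_add' := fun x y => rfl
        map_smul' := fun c x => rfl }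
    have hinj : Function.Injective f := by
      intro x y hxy
      ext i
      have hx := (key_aux n A lam hlam β hβ _ _ (by
        have hx := (memAβ x).mp x.2
        have : Sum.elim (fun i => (x : Fin n ⊕ Fin n → ℝ) (Sum.inl i))
            (fun i => (x : Fin n ⊕ Fin n → ℝ) (Sum.inr i)) = (x : Fin n ⊕ Fin n → ℝ) := by
          funext i; cases i <;> rfl
        rw [this]; exact hx)).1
      have hy := (key_aux n A lam hlam β hβ _ _ (by
        have hy := (memAβ y).mp y.2
        have : Sum.elim (fun i => (y : Fin n ⊕ Fin n → ℝ) (Sum.inl i))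
            (fun i => (y : Fin n ⊕ Fin n → ℝ) (Sum.inr i)) = (y : Fin n ⊕ Fin n → ℝ) := by
          funext i; cases i <;> rfl
        rw [this]; exact hy)).1
      have hcomp : ∀ j, (x : Fin n ⊕ Fin n → ℝ) (Sum.inr j) = (y : Fin n ⊕ Fin n → ℝ) (Sum.inr j) := by
        intro j
        exact congrFun (congrArg (Subtype.val) hxy) j
      cases i with
      | inr j => exact hcomp j
      | inl j =>
        have := congrFun hx j
        have := congrFun hy j
        simp only [Pi.smul_apply, smul_eq_mul] at *
        rw [congrFun hx j, congrFun hy j]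
        simp [hcomp j]
    have hsurj : Function.Surjective f := by
      rintro ⟨v, hv⟩
      refine ⟨⟨Sum.elim ((lam / 2) • v) v, ?_⟩, rfl⟩
      rw [memAβ]
      exact hmem v ((memA v).mp hv)
    exact (LinearEquiv.ofBijective f ⟨hinj, hsurj⟩).finrank_eq
end

section
/- Let λ be an eigenvalue of a real n×n matrix A with algebraic multiplicity m ≥ 1 and geometric multiplicity m, and let β = λ²/4 with λ ≠ 0. Then the augmented matrix A_β = [[A, -βI],[I, 0]] has eigenvalue μ = λ/2 with geometric multiplicity m and algebraic multiplicity at least 2m; in particular A_β is not diagonalizable. -/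
/-!
Put `μ = λ / 2`, so that `β = μ ^ 2` and `μ` is a double root of `t ^ 2 - λ t + β`. A vector
`(x, y)` is a `μ`-eigenvector of `A_β` exactly when `x = μ y` and `A y = λ y`, which matches the
geometric multiplicities. For `x, y` in the `λ`-eigenspace of `A`, `(A_β - μ) (x, y) = (μ z, z)`
with `z = x - μ y`, again a `μ`-eigenvector. So two copies of the `λ`-eigenspace of `A` embed in
`ker (A_β - μ) ^ 2`, giving algebraic multiplicity at least `2 m`; and for `y ≠ 0`, `(y, 0)` lies in
`ker (A_β - μ) ^ 2` but not in `ker (A_β - μ)`, which is impossible for a diagonalizable matrix.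
-/

open Matrix

lemma Sum.smul_elim {α β M γ : Type*} [SMul M γ] (c : M) (x : α → γ) (y : β → γ) :
    c • Sum.elim x y = Sum.elim (c • x) (c • y) := by
  ext (i | i) <;> rfl

section Diagonalizable

variable {R n : Type*} [CommRing R] [Fintype n] [DecidableEq n]

lemma Matrix.IsDiag.mulVec_eq_zero_of_mulVec_mulVec_eq_zero [NoZeroDivisors R]
    {D : Matrix n n R} (hD : D.IsDiag) {u : n → R} (h : D *ᵥ (D *ᵥ u) = 0) : D *ᵥ u = 0 := by
  rw [← hD.diagonal_diag] at h ⊢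
  funext i
  have hi := congrFun h i
  simp only [mulVec_diagonal, Pi.zero_apply, mul_eq_zero] at hi ⊢
  tauto

lemma Matrix.isDiag_conj_sub_smul_one {P M : Matrix n n R} (hP : IsUnit P)
    (hD : (P⁻¹ * M * P).IsDiag) (μ : R) : (P⁻¹ * (M - μ • 1) * P).IsDiag := by
  have hPP : P⁻¹ * P = 1 := nonsing_inv_mul P ((isUnit_iff_isUnit_det P).mp hP)
  rw [Matrix.mul_sub, Matrix.sub_mul, Matrix.mul_smul, Matrix.smul_mul, Matrix.mul_one, hPP]
  exact hD.sub (isDiag_one.smul μ)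

lemma Matrix.mulVec_eq_zero_of_isDiag_conj [NoZeroDivisors R] {P N : Matrix n n R}
    (hP : IsUnit P) (hD : (P⁻¹ * N * P).IsDiag) {v : n → R} (h : N *ᵥ (N *ᵥ v) = 0) :
    N *ᵥ v = 0 := by
  have hPdet := (isUnit_iff_isUnit_det P).mp hP
  have hsq : (P⁻¹ * N * P) *ᵥ ((P⁻¹ * N * P) *ᵥ (P⁻¹ *ᵥ v)) = P⁻¹ *ᵥ (N *ᵥ (N *ᵥ v)) := by
    simp only [mulVec_mulVec, Matrix.mul_assoc, mul_nonsing_inv P hPdet, Matrix.mul_one,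
      mul_nonsing_inv_cancel_left _ _ hPdet]
  have hconj : P *ᵥ ((P⁻¹ * N * P) *ᵥ (P⁻¹ *ᵥ v)) = N *ᵥ v := by
    simp only [mulVec_mulVec, Matrix.mul_assoc, mul_nonsing_inv P hPdet, Matrix.mul_one,
      mul_nonsing_inv_cancel_left _ _ hPdet]
  rw [h, mulVec_zero] at hsq
  rw [← hconj, hD.mulVec_eq_zero_of_mulVec_mulVec_eq_zero hsq, mulVec_zero]

end Diagonalizable

section CommRing

variable {R ι : Type*} [CommRing R] [DecidableEq ι]

def augmentedMatrix (A : Matrix ι ι R) (β : R) : Matrix (ι ⊕ ι) (ι ⊕ ι) R :=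
  fromBlocks A (-β • 1) 1 0

lemma augmentedMatrix_map {S : Type*} [CommRing S] (A : Matrix ι ι R) (β : R) (f : R →+* S) :
    (augmentedMatrix A β).map f = augmentedMatrix (A.map f) (f β) := by
  simp [augmentedMatrix, fromBlocks_map, Matrix.map_smul', Matrix.map_neg]

variable [Fintype ι]

lemma augmentedMatrix_mulVec_sumElim (A : Matrix ι ι R) (β : R) (x y : ι → R) :
    augmentedMatrix A β *ᵥ Sum.elim x y = Sum.elim (A *ᵥ x - β • y) x := by
  simp [augmentedMatrix, fromBlocks_mulVec, neg_mulVec, smul_mulVec, sub_eq_add_neg]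

lemma augmentedMatrix_sub_smul_mulVec_sumElim {A : Matrix ι ι R} {μ : R} {x y : ι → R}
    (hx : A *ᵥ x = (2 * μ) • x) :
    (augmentedMatrix A (μ ^ 2) - μ • 1) *ᵥ Sum.elim x y =
      Sum.elim (μ • (x - μ • y)) (x - μ • y) := by
  rw [sub_mulVec, smul_mulVec, one_mulVec, augmentedMatrix_mulVec_sumElim, hx, Sum.smul_elim,
    ← Sum.elim_sub_sub]
  congr 1
  module

lemma augmentedMatrix_sub_smul_sq_mulVec_sumElim {A : Matrix ι ι R} {μ : R} {x y : ι → R}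
    (hx : A *ᵥ x = (2 * μ) • x) (hy : A *ᵥ y = (2 * μ) • y) :
    (augmentedMatrix A (μ ^ 2) - μ • 1) *ᵥ ((augmentedMatrix A (μ ^ 2) - μ • 1) *ᵥ Sum.elim x y)
      = 0 := by
  have hz : A *ᵥ (x - μ • y) = (2 * μ) • (x - μ • y) := by
    rw [mulVec_sub, mulVec_smul, hx, hy, smul_sub, smul_comm]
  rw [augmentedMatrix_sub_smul_mulVec_sumElim hx,
    augmentedMatrix_sub_smul_mulVec_sumElim (by rw [mulVec_smul, hz, smul_comm]), sub_self,
    smul_zero, Sum.elim_zero_zero]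

lemma not_exists_isDiag_conj_augmentedMatrix [NoZeroDivisors R] {A : Matrix ι ι R} {μ : R}
    {y : ι → R} (hy : A *ᵥ y = (2 * μ) • y) (hy0 : y ≠ 0) :
    ¬ ∃ P : Matrix (ι ⊕ ι) (ι ⊕ ι) R, IsUnit P ∧ (P⁻¹ * augmentedMatrix A (μ ^ 2) * P).IsDiag := by
  rintro ⟨P, hP, hD⟩
  have hker := mulVec_eq_zero_of_isDiag_conj hP (isDiag_conj_sub_smul_one hP hD μ)
    (augmentedMatrix_sub_smul_sq_mulVec_sumElim hy (y := 0) (by simp))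
  rw [augmentedMatrix_sub_smul_mulVec_sumElim hy, smul_zero, sub_zero, ← Sum.elim_zero_zero,
    Sum.elim_eq_iff] at hker
  exact hy0 hker.2

end CommRing

section Field

variable {K ι : Type*} [Field K] [Fintype ι] [DecidableEq ι] {A : Matrix ι ι K} {μ lam β : K}

lemma sumElim_mem_eigenspace_augmentedMatrix_iff (hμ : μ ≠ 0) (hβ : μ * (lam - μ) = β)
    {x y : ι → K} :
    Sum.elim x y ∈ Module.End.eigenspace (toLin' (augmentedMatrix A β)) μ ↔
      x = μ • y ∧ A *ᵥ y = lam • y := by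
  rw [Module.End.mem_eigenspace_iff, toLin'_apply, augmentedMatrix_mulVec_sumElim, Sum.smul_elim,
    Sum.elim_eq_iff]
  constructor
  · rintro ⟨h, rfl⟩
    refine ⟨rfl, smul_right_injective _ hμ ?_⟩
    rw [mulVec_smul, ← hβ] at h
    rw [← sub_eq_zero] at h ⊢
    rw [← h]
    module
  · rintro ⟨rfl, h⟩
    refine ⟨?_, rfl⟩
    rw [mulVec_smul, h, ← hβ]
    module

variable (A) in
def eigenspaceAugmentedMatrixEquiv (hμ : μ ≠ 0) (hβ : μ * (lam - μ) = β) :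
    Module.End.eigenspace (toLin' (augmentedMatrix A β)) μ ≃ₗ[K]
      Module.End.eigenspace (toLin' A) lam where
  toFun v := ⟨(v : ι ⊕ ι → K) ∘ Sum.inr, by
    have hv := v.2
    rw [← Sum.elim_comp_inl_inr (v : ι ⊕ ι → K),
      sumElim_mem_eigenspace_augmentedMatrix_iff hμ hβ] at hv
    rw [Module.End.mem_eigenspace_iff, toLin'_apply]
    exact hv.2⟩
  map_add' _ _ := rfl
  map_smul' _ _ := rfl
  invFun y := ⟨Sum.elim (μ • (y : ι → K)) y, by
    rw [sumElim_mem_eigenspace_augmentedMatrix_iff hμ hβ]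
    have hy := y.2
    rw [Module.End.mem_eigenspace_iff, toLin'_apply] at hy
    exact ⟨rfl, hy⟩⟩
  left_inv v := by
    have hv := v.2
    rw [← Sum.elim_comp_inl_inr (v : ι ⊕ ι → K),
      sumElim_mem_eigenspace_augmentedMatrix_iff hμ hβ] at hv
    ext1
    conv_rhs => rw [← Sum.elim_comp_inl_inr (v : ι ⊕ ι → K), hv.1]
  right_inv _ := rfl

lemma two_mul_finrank_eigenspace_le_rootMultiplicity_augmentedMatrix :
    2 * Module.finrank K (Module.End.eigenspace (toLin' A) (2 * μ)) ≤
      (augmentedMatrix A (μ ^ 2)).charpoly.rootMultiplicity μ := by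
  set E := Module.End.eigenspace (toLin' A) (2 * μ)
  set Aβ := augmentedMatrix A (μ ^ 2)
  let f : E × E →ₗ[K] ι ⊕ ι → K :=
    (LinearEquiv.sumArrowLequivProdArrow ι ι K K).symm.toLinearMap ∘ₗ E.subtype.prodMap E.subtype
  have hf (p : E × E) : f p ∈ Module.End.genEigenspace (toLin' Aβ) μ (2 : ℕ) := by
    have h₁ := Module.End.mem_eigenspace_iff.mp p.1.2
    have h₂ := Module.End.mem_eigenspace_iff.mp p.2.2
    rw [toLin'_apply] at h₁ h₂
    rw [Module.End.mem_genEigenspace_nat, LinearMap.mem_ker, Module.End.one_eq_id, ← toLin'_one,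
      ← map_smul, ← map_sub, pow_two, Module.End.mul_apply, toLin'_apply, toLin'_apply]
    exact augmentedMatrix_sub_smul_sq_mulVec_sumElim h₁ h₂
  have hinj : Function.Injective (f.codRestrict _ hf) := fun p q hpq =>
    Subtype.val_injective.prodMap Subtype.val_injective <|
      (LinearEquiv.sumArrowLequivProdArrow ι ι K K).symm.injective (congrArg Subtype.val hpq)
  calc 2 * Module.finrank K E = Module.finrank K (E × E) := by rw [Module.finrank_prod]; ring
    _ ≤ _ := LinearMap.finrank_le_finrank_of_injective hinj
    _ ≤ _ := by
      simpa [charpoly_toLin'] using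
        LinearMap.finrank_genEigenspace_le (toLin' Aβ) μ 2

end Field

theorem stmt2_general (n : ℕ) (A : Matrix (Fin n) (Fin n) ℝ) (lam : ℝ) (hlam : lam ≠ 0)
    (m : ℕ) (hm : 1 ≤ m)
    (hgeo : Module.finrank ℝ (Module.End.eigenspace (Matrix.toLin' A) lam) = m)
    (β : ℝ) (hβ : β = lam ^ 2 / 4) :
    let Aβ : Matrix (Fin n ⊕ Fin n) (Fin n ⊕ Fin n) ℝ :=
      Matrix.fromBlocks A (-β • 1) 1 0
    (Module.finrank ℝ
        (Module.End.eigenspace (Matrix.toLin' Aβ) (lam / 2)) = m) ∧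
    2 * m ≤ (Matrix.charpoly Aβ).rootMultiplicity (lam / 2) ∧
    ¬ ∃ P : Matrix (Fin n ⊕ Fin n) (Fin n ⊕ Fin n) ℂ, IsUnit P ∧
        (P⁻¹ * (Aβ.map (fun x => (x : ℂ))) * P).IsDiag := by
  intro Aβ
  obtain ⟨μ, rfl⟩ : ∃ μ, lam = 2 * μ := ⟨lam / 2, by ring⟩
  obtain rfl : β = μ ^ 2 := by rw [hβ]; ring
  have hμ : μ ≠ 0 := right_ne_zero_of_mul hlam
  rw [show 2 * μ / 2 = μ by ring]
  refine ⟨?_, ?_, ?_⟩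
  · rw [← hgeo]
    exact (eigenspaceAugmentedMatrixEquiv A hμ (by ring)).finrank_eq
  · rw [← hgeo]
    exact two_mul_finrank_eigenspace_le_rootMultiplicity_augmentedMatrix
  · obtain ⟨y, hy, hy0⟩ : ∃ y ∈ Module.End.eigenspace (toLin' A) (2 * μ), y ≠ 0 :=
      Submodule.exists_mem_ne_zero_of_ne_bot fun h => by
        rw [h, finrank_bot] at hgeo
        omega
    rw [Module.End.mem_eigenspace_iff, toLin'_apply] at hy
    have hyℂ : A.map Complex.ofRealHom *ᵥ (Complex.ofRealHom ∘ y) =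
        (2 * (μ : ℂ)) • (Complex.ofRealHom ∘ y) := by
      funext i
      simp [← RingHom.map_mulVec, hy]
    change ¬ ∃ P, IsUnit P ∧ (P⁻¹ * (augmentedMatrix A (μ ^ 2)).map Complex.ofRealHom * P).IsDiag
    rw [augmentedMatrix_map, map_pow]
    exact not_exists_isDiag_conj_augmentedMatrix hyℂ
      (fun h => hy0 (funext fun i => by simpa using congrFun h i))

theorem stmt2 (n : ℕ) (A : Matrix (Fin n) (Fin n) ℝ) (lam : ℝ) (hlam : lam ≠ 0)
    (m : ℕ) (hm : 1 ≤ m)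
    (halg : (Matrix.charpoly A).rootMultiplicity lam = m)
    (hgeo : Module.finrank ℝ (Module.End.eigenspace (Matrix.toLin' A) lam) = m)
    (β : ℝ) (hβ : β = lam ^ 2 / 4) :
    let Aβ : Matrix (Fin n ⊕ Fin n) (Fin n ⊕ Fin n) ℝ :=
      Matrix.fromBlocks A (-β • 1) 1 0
    (Module.finrank ℝ
        (Module.End.eigenspace (Matrix.toLin' Aβ) (lam / 2)) = m) ∧
    2 * m ≤ (Matrix.charpoly Aβ).rootMultiplicity (lam / 2) ∧
    ¬ ∃ P : Matrix (Fin n ⊕ Fin n) (Fin n ⊕ Fin n) ℂ, IsUnit P ∧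
        (P⁻¹ * (Aβ.map (fun x => (x : ℂ))) * P).IsDiag :=
  stmt2_general n A lam hlam m hm hgeo β hβ
end

section
/- Define h : (0, λ₁²/4) → ℝ by h(β) = 2√β / (|λ₁| + √(λ₁² - 4β)) for λ₂²/4 < β < λ₁²/4 and h(β) = (|λ₂| + √(λ₂² - 4β)) / (|λ₁| + √(λ₁² - 4β)) for 0 < β ≤ λ₂²/4, where 0 < |λ₂| < |λ₁|. Then h is strictly decreasing on (0, λ₂²/4), strictly increasing on (λ₂²/4, λ₁²/4), and achieves its unique minimum at β = λ₂²/4, with minimum value |λ₂|/(|λ₁| + √(λ₁² - λ₂²)). -/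
open Set

private lemma lower_cross (a b β₁ β₂ : ℝ) (hb : 0 < b) (hba : b < a)
    (h1 : 0 < β₁) (h12 : β₁ < β₂) (h2 : β₂ ≤ b ^ 2 / 4) :
    (b + Real.sqrt (b ^ 2 - 4 * β₂)) * (a + Real.sqrt (a ^ 2 - 4 * β₁)) <
      (b + Real.sqrt (b ^ 2 - 4 * β₁)) * (a + Real.sqrt (a ^ 2 - 4 * β₂)) := by
  set s₁ := Real.sqrt (b ^ 2 - 4 * β₁) with hs₁
  set s₂ := Real.sqrt (b ^ 2 - 4 * β₂) with hs₂
  set t₁ := Real.sqrt (a ^ 2 - 4 * β₁) with ht₁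
  set t₂ := Real.sqrt (a ^ 2 - 4 * β₂) with ht₂
  have hb2 : b ^ 2 < a ^ 2 := by nlinarith
  have hs₁nn : (0:ℝ) ≤ b ^ 2 - 4 * β₁ := by nlinarith
  have hs₂nn : (0:ℝ) ≤ b ^ 2 - 4 * β₂ := by nlinarith
  have hs₁sq : s₁ ^ 2 = b ^ 2 - 4 * β₁ := Real.sq_sqrt hs₁nn
  have hs₂sq : s₂ ^ 2 = b ^ 2 - 4 * β₂ := Real.sq_sqrt hs₂nn
  have ht₁sq : t₁ ^ 2 = a ^ 2 - 4 * β₁ := Real.sq_sqrt (by nlinarith)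
  have ht₂sq : t₂ ^ 2 = a ^ 2 - 4 * β₂ := Real.sq_sqrt (by nlinarith)
  have hs₂0 : 0 ≤ s₂ := Real.sqrt_nonneg _
  have ht₂0 : 0 ≤ t₂ := Real.sqrt_nonneg _
  have hs21 : s₂ < s₁ := Real.sqrt_lt_sqrt hs₂nn (by linarith)
  have ht21 : t₂ < t₁ := Real.sqrt_lt_sqrt (by nlinarith) (by linarith)
  have hst1 : s₁ < t₁ := Real.sqrt_lt_sqrt hs₁nn (by nlinarith)
  have hst2 : s₂ < t₂ := Real.sqrt_lt_sqrt hs₂nn (by nlinarith)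
  have hs₁pos : 0 < s₁ := lt_of_le_of_lt hs₂0 hs21
  have ht₂pos : 0 < t₂ := lt_of_le_of_lt hs₂0 hst2
  have ht₁0 : 0 ≤ t₁ := Real.sqrt_nonneg _
  -- key1 : a*(s₁-s₂) > b*(t₁-t₂)
  have hdiff : (s₁ - s₂) * (s₁ + s₂) = (t₁ - t₂) * (t₁ + t₂) := by
    linear_combination hs₁sq - hs₂sq - ht₁sq + ht₂sq
  have hsum : s₁ + s₂ < t₁ + t₂ := by linarith
  have hsp : 0 < s₁ + s₂ := by linarith
  have hdd : t₁ - t₂ < s₁ - s₂ := by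
    refine lt_of_mul_lt_mul_right ?_ hsp.le
    rw [hdiff]
    exact mul_lt_mul_of_pos_left hsum (by linarith)
  have key1 : b * (t₁ - t₂) < a * (s₁ - s₂) :=
    calc b * (t₁ - t₂) < a * (t₁ - t₂) :=
          mul_lt_mul_of_pos_right hba (by linarith)
      _ < a * (s₁ - s₂) := mul_lt_mul_of_pos_left hdd (by linarith)
  -- key2 : s₂ * t₁ ≤ s₁ * t₂
  have key2 : s₂ * t₁ ≤ s₁ * t₂ := by
    have e1 : (s₂ * t₁) ^ 2 = (b ^ 2 - 4 * β₂) * (a ^ 2 - 4 * β₁) := by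
      rw [mul_pow, hs₂sq, ht₁sq]
    have e2 : (s₁ * t₂) ^ 2 = (b ^ 2 - 4 * β₁) * (a ^ 2 - 4 * β₂) := by
      rw [mul_pow, hs₁sq, ht₂sq]
    have hsq2 : (s₂ * t₁) ^ 2 ≤ (s₁ * t₂) ^ 2 := by
      rw [e1, e2]
      nlinarith [mul_pos (show (0:ℝ) < a ^ 2 - b ^ 2 by linarith)
        (show (0:ℝ) < β₂ - β₁ by linarith)]
    exact (pow_le_pow_iff_left₀ (mul_nonneg hs₂0 ht₁0)
      (mul_nonneg hs₁pos.le ht₂pos.le) two_ne_zero).mp hsq2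
  calc (b + s₂) * (a + t₁) = b * a + b * t₁ + a * s₂ + s₂ * t₁ := by ring
    _ < b * a + b * t₂ + a * s₁ + s₁ * t₂ := by linarith
    _ = (b + s₁) * (a + t₂) := by ring

theorem stmt6 (lam₁ lam₂ : ℝ) (h2 : 0 < |lam₂|) (h12 : |lam₂| < |lam₁|)
    (h : ℝ → ℝ)
    (hup : ∀ β, lam₂ ^ 2 / 4 < β → β < lam₁ ^ 2 / 4 →
      h β = 2 * Real.sqrt β / (|lam₁| + Real.sqrt (lam₁ ^ 2 - 4 * β)))
    (hlo : ∀ β, 0 < β → β ≤ lam₂ ^ 2 / 4 →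
      h β = (|lam₂| + Real.sqrt (lam₂ ^ 2 - 4 * β)) /
        (|lam₁| + Real.sqrt (lam₁ ^ 2 - 4 * β))) :
    StrictAntiOn h (Set.Ioc 0 (lam₂ ^ 2 / 4)) ∧
    StrictMonoOn h (Set.Ico (lam₂ ^ 2 / 4) (lam₁ ^ 2 / 4)) ∧
    (∀ β ∈ Set.Ioo (0 : ℝ) (lam₁ ^ 2 / 4), β ≠ lam₂ ^ 2 / 4 →
      h (lam₂ ^ 2 / 4) < h β) ∧
    h (lam₂ ^ 2 / 4) = |lam₂| / (|lam₁| + Real.sqrt (lam₁ ^ 2 - lam₂ ^ 2)) := by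
  set a := |lam₁| with ha
  set b := |lam₂| with hb
  have hA : 0 < a := lt_trans h2 h12
  have ha2 : lam₁ ^ 2 = a ^ 2 := (sq_abs lam₁).symm
  have hb2 : lam₂ ^ 2 = b ^ 2 := (sq_abs lam₂).symm
  have hsqlt : b ^ 2 < a ^ 2 := by nlinarith
  rw [ha2, hb2] at hup hlo ⊢
  -- value at b^2/4
  have hmidpos : 0 < b ^ 2 / 4 := by positivity
  have hmidlt : b ^ 2 / 4 < a ^ 2 / 4 := by linarith
  have hval : h (b ^ 2 / 4) = b / (a + Real.sqrt (a ^ 2 - b ^ 2)) := by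
    rw [hlo _ hmidpos le_rfl]
    have : b ^ 2 - 4 * (b ^ 2 / 4) = 0 := by ring
    rw [this, Real.sqrt_zero, add_zero]
    congr 2
    ring
  -- denominators positive
  have hden : ∀ β : ℝ, 0 < a + Real.sqrt (a ^ 2 - 4 * β) := fun β =>
    lt_of_lt_of_le hA (le_add_of_nonneg_right (Real.sqrt_nonneg _))
  -- StrictAntiOn on lower interval
  have hanti : StrictAntiOn h (Set.Ioc 0 (b ^ 2 / 4)) := by
    intro x hx y hy hxy
    rw [hlo x hx.1 hx.2, hlo y hy.1 hy.2]
    rw [div_lt_div_iff₀ (hden y) (hden x)]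
    exact lower_cross a b x y h2 h12 hx.1 hxy hy.2
  -- upper formula holds on Ico (b^2/4) (a^2/4)
  have hup' : ∀ β ∈ Set.Ico (b ^ 2 / 4) (a ^ 2 / 4),
      h β = 2 * Real.sqrt β / (a + Real.sqrt (a ^ 2 - 4 * β)) := by
    intro β hβ
    rcases eq_or_lt_of_le hβ.1 with heq | hlt
    · rw [← heq, hval]
      have h1 : b ^ 2 / 4 = (b / 2) ^ 2 := by ring
      rw [h1, Real.sqrt_sq (by positivity), show a ^ 2 - 4 * ((b/2)^2) = a ^ 2 - b ^ 2 by ring]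
      congr 1
      ring
    · exact hup β hlt hβ.2
  -- StrictMonoOn on upper interval
  have hmono : StrictMonoOn h (Set.Ico (b ^ 2 / 4) (a ^ 2 / 4)) := by
    intro x hx y hy hxy
    rw [hup' x hx, hup' y hy]
    have hx0 : 0 < x := lt_of_lt_of_le hmidpos hx.1
    have hy0 : 0 < y := lt_trans hx0 hxy
    have hnum : Real.sqrt x < Real.sqrt y := Real.sqrt_lt_sqrt (le_of_lt hx0) hxy
    have hnum0 : 0 < Real.sqrt x := Real.sqrt_pos.mpr hx0
    have hd : Real.sqrt (a ^ 2 - 4 * y) < Real.sqrt (a ^ 2 - 4 * x) :=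
      Real.sqrt_lt_sqrt (by nlinarith [hy.2]) (by linarith)
    rw [div_lt_div_iff₀ (hden x) (hden y)]
    have h1 : 0 ≤ Real.sqrt (a ^ 2 - 4 * y) := Real.sqrt_nonneg _
    nlinarith
  refine ⟨hanti, hmono, ?_, hval⟩
  intro β hβ hne
  rcases lt_or_gt_of_ne hne with hlt | hgt
  · exact hanti ⟨hβ.1, le_of_lt hlt⟩ ⟨hmidpos, le_rfl⟩ hlt
  · exact hmono ⟨le_rfl, hmidlt⟩ ⟨le_of_lt hgt, hβ.2⟩ hgt
end

section
/- Let λ ∈ ℝ and let β₁ ≥ β₂ > 0 satisfy λ²/4 ≤ β₂. Let μ⁽ʲ⁾ = λ/2 + (i/2)√(4βⱼ - λ²) for j = 1,2. Then |μ⁽¹⁾ - μ⁽²⁾| ≤ √β₁ = |μ⁽¹⁾|. -/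
open Complex

theorem norm_half_add_I_half_mul_sqrt {a β : ℝ} (h : a ^ 2 ≤ 4 * β) :
    ‖(a / 2 : ℂ) + (I / 2) * Real.sqrt (4 * β - a ^ 2)‖ = Real.sqrt β := by
  have hcoe : (a / 2 : ℂ) + (I / 2) * Real.sqrt (4 * β - a ^ 2)
      = ((a / 2 : ℝ) : ℂ) + ((Real.sqrt (4 * β - a ^ 2) / 2 : ℝ) : ℂ) * I := by
    push_cast; ring
  rw [hcoe, norm_add_mul_I, div_pow, div_pow, Real.sq_sqrt (by linarith)]
  congr 1
  ring

theorem sqrt_four_mul_sub_sq_le (a β : ℝ) :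
    Real.sqrt (4 * β - a ^ 2) ≤ 2 * Real.sqrt β :=
  calc Real.sqrt (4 * β - a ^ 2) ≤ Real.sqrt (4 * β) :=
        Real.sqrt_le_sqrt (by nlinarith [sq_nonneg a])
    _ = 2 * Real.sqrt β := by
        rw [Real.sqrt_mul zero_le_four, show (4 : ℝ) = 2 ^ 2 by norm_num,
          Real.sqrt_sq zero_le_two]

theorem norm_I_div_two_mul_ofReal_sub (x y : ℝ) :
    ‖I / 2 * ((x : ℂ) - y)‖ = |x - y| / 2 := by
  rw [← ofReal_sub, norm_mul, norm_div, norm_I, norm_real, Real.norm_eq_abs]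
  norm_num
  ring

theorem stmt15_general (lam β₁ β₂ : ℝ) (h21 : β₂ ≤ β₁)
    (hlam : lam ^ 2 / 4 ≤ β₂) :
    let μ₁ : ℂ := lam / 2 + (Complex.I / 2) * Real.sqrt (4 * β₁ - lam ^ 2)
    let μ₂ : ℂ := lam / 2 + (Complex.I / 2) * Real.sqrt (4 * β₂ - lam ^ 2)
    ‖μ₁ - μ₂‖ ≤ Real.sqrt β₁ ∧
    ‖μ₁‖ = Real.sqrt β₁ := by
  intro μ₁ μ₂
  set s₁ := Real.sqrt (4 * β₁ - lam ^ 2)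
  set s₂ := Real.sqrt (4 * β₂ - lam ^ 2)
  have hs₁ : s₁ ≤ 2 * Real.sqrt β₁ := sqrt_four_mul_sub_sq_le lam β₁
  have hs₂ : s₂ ≤ 2 * Real.sqrt β₁ :=
    (sqrt_four_mul_sub_sq_le lam β₂).trans (by gcongr)
  refine ⟨?_, norm_half_add_I_half_mul_sqrt (by linarith)⟩
  calc ‖μ₁ - μ₂‖ = ‖I / 2 * ((s₁ : ℂ) - s₂)‖ := by congr 1; ring
    _ = |s₁ - s₂| / 2 := norm_I_div_two_mul_ofReal_sub s₁ s₂
    _ ≤ 2 * Real.sqrt β₁ / 2 := by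
        gcongr
        exact abs_sub_le_of_nonneg_of_le (Real.sqrt_nonneg _) hs₁ (Real.sqrt_nonneg _) hs₂
    _ = Real.sqrt β₁ := by ring

theorem stmt15 (lam β₁ β₂ : ℝ) (h21 : β₂ ≤ β₁) (h2 : 0 < β₂)
    (hlam : lam ^ 2 / 4 ≤ β₂) :
    let μ₁ : ℂ := lam / 2 + (Complex.I / 2) * Real.sqrt (4 * β₁ - lam ^ 2)
    let μ₂ : ℂ := lam / 2 + (Complex.I / 2) * Real.sqrt (4 * β₂ - lam ^ 2)
    ‖μ₁ - μ₂‖ ≤ Real.sqrt β₁ ∧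
    ‖μ₁‖ = Real.sqrt β₁ :=
  stmt15_general lam β₁ β₂ h21 hlam
end

section
/- Suppose β ≥ λ₁²/4 where λ₁ is the largest-magnitude eigenvalue of the real n×n matrix A. Then every eigenvalue μ of the augmented matrix A_β = [[A, -βI],[I, 0]] satisfies |μ| = √β; in particular A_β has no eigenvalue of strictly dominant magnitude. -/
/-!
If `μ ≠ 0`, a Schur complement turns `det (μ - A_β)` into `μ ^ n * det (μ + β / μ - A)`, so
`μ + β / μ = λ` is a (real) eigenvalue of `A`, i.e. `μ² - λ μ + β = 0`. Since `λ² ≤ λ₁² ≤ 4β`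
this quadratic has non-positive discriminant, and then both its roots have modulus `√β`.
If `μ = 0`, then `A_β` is singular, which forces `β = 0`.
-/

open Matrix

namespace Matrix

variable {K ι : Type*} [Field K] [Fintype ι] [DecidableEq ι]

/-- The companion linearization of the quadratic matrix polynomial `X² - A X + b`. -/
def blockCompanion (A : Matrix ι ι K) (b : K) : Matrix (ι ⊕ ι) (ι ⊕ ι) K :=
  fromBlocks A (-b • 1) 1 0

theorem blockCompanion_mul_eq_one (A : Matrix ι ι K) {b : K} (hb : b ≠ 0) :
    blockCompanion A b * fromBlocks 0 1 (-b⁻¹ • 1) (b⁻¹ • A) = 1 := by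
  rw [blockCompanion, fromBlocks_multiply, ← fromBlocks_one]
  simp [smul_smul, hb]

theorem eq_zero_of_zero_mem_spectrum_blockCompanion {A : Matrix ι ι K} {b : K}
    (h : 0 ∈ spectrum K (blockCompanion A b)) : b = 0 := by
  by_contra hb
  exact (spectrum.zero_mem_iff K).1 h <| (isUnit_iff_isUnit_det _).2 <|
    isUnit_det_of_right_inverse (blockCompanion_mul_eq_one A hb)

theorem det_algebraMap_sub_blockCompanion (A : Matrix ι ι K) (b : K) {μ : K} (hμ : μ ≠ 0) :
    (algebraMap K _ μ - blockCompanion A b).det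
      = μ ^ Fintype.card ι * (algebraMap K _ (μ + b / μ) - A).det := by
  have hinv : μ • (1 : Matrix ι ι K) * (μ⁻¹ • 1) = 1 := by simp [smul_smul, hμ]
  let _ := invertibleOfRightInverse _ _ hinv
  have hblocks : algebraMap K _ μ - blockCompanion A b
      = fromBlocks (μ • 1 - A) (b • 1) (-1) (μ • 1) := by
    rw [Algebra.algebraMap_eq_smul_one, blockCompanion, ← fromBlocks_one, fromBlocks_smul,
      sub_eq_add_neg, fromBlocks_neg, fromBlocks_add]
    simp [← sub_eq_add_neg]
  rw [hblocks, det_fromBlocks₂₂, det_smul, det_one, mul_one, invOf_eq_right_inv hinv]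
  congr 2
  rw [Algebra.algebraMap_eq_smul_one, div_eq_mul_inv]
  simp only [smul_mul, one_mul, mul_neg, mul_one]
  module

theorem mem_spectrum_blockCompanion_iff {A : Matrix ι ι K} {b μ : K} (hμ : μ ≠ 0) :
    μ ∈ spectrum K (blockCompanion A b) ↔ μ + b / μ ∈ spectrum K A := by
  simp only [spectrum.mem_iff, isUnit_iff_isUnit_det, isUnit_iff_ne_zero, not_not,
    det_algebraMap_sub_blockCompanion A b hμ, mul_eq_zero, pow_ne_zero _ hμ, false_or]

end Matrix

namespace Complex

theorem norm_eq_sqrt_of_sq_sub_mul_add_eq_zero {c b : ℝ} (hdisc : c ^ 2 ≤ 4 * b) {μ : ℂ}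
    (h : μ ^ 2 - c * μ + b = 0) : ‖μ‖ = √b := by
  have hre : μ.re ^ 2 - μ.im ^ 2 - c * μ.re + b = 0 := by
    have := congrArg re h
    simp only [sq, add_re, sub_re, mul_re, ofReal_re, ofReal_im, zero_mul, sub_zero,
      zero_re] at this
    linear_combination this
  have him : μ.im * (2 * μ.re - c) = 0 := by
    have := congrArg im h
    simp only [sq, add_im, sub_im, mul_im, ofReal_re, ofReal_im, zero_mul, add_zero,
      zero_im] at this
    linear_combination this
  -- a real root is the double root `c / 2`, as the discriminant is `≤ 0`
  have htrace : 2 * μ.re = c := by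
    rcases mul_eq_zero.1 him with him0 | htrace
    · rw [him0] at hre
      nlinarith [sq_nonneg (2 * μ.re - c)]
    · linarith
  rw [← Real.sqrt_sq (norm_nonneg μ), Complex.sq_norm, normSq_apply]
  congr 1
  linear_combination -hre + μ.re * htrace

end Complex

theorem stmt19_general (n : ℕ) (A : Matrix (Fin n) (Fin n) ℝ) (lam₁ β : ℝ)
    (hreal : ∀ μ ∈ spectrum ℂ (A.map (fun x => (x : ℂ))),
      ∃ lam : ℝ, μ = (lam : ℂ) ∧ |lam| ≤ |lam₁|)
    (hβ : lam₁ ^ 2 / 4 ≤ β) :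
    let Aβ : Matrix (Fin n ⊕ Fin n) (Fin n ⊕ Fin n) ℂ :=
      Matrix.fromBlocks (A.map (fun x => (x : ℂ))) (-(β : ℂ) • 1) 1 0
    ∀ μ ∈ spectrum ℂ Aβ, ‖μ‖ = Real.sqrt β := by
  intro Aβ μ hμ
  rcases eq_or_ne μ 0 with rfl | hμ0
  · have hβ0 : (β : ℂ) = 0 := eq_zero_of_zero_mem_spectrum_blockCompanion hμ
    simp [Complex.ofReal_eq_zero.1 hβ0]
  obtain ⟨lam, hlam, hlam_le⟩ := hreal _ ((mem_spectrum_blockCompanion_iff hμ0).1 hμ)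
  apply Complex.norm_eq_sqrt_of_sq_sub_mul_add_eq_zero (c := lam)
  · nlinarith [sq_le_sq.2 hlam_le]
  · field_simp at hlam
    linear_combination hlam

theorem stmt19 (n : ℕ) (A : Matrix (Fin n) (Fin n) ℝ) (lam₁ β : ℝ)
    (h1 : (lam₁ : ℂ) ∈ spectrum ℂ (A.map (fun x => (x : ℂ))))
    (hreal : ∀ μ ∈ spectrum ℂ (A.map (fun x => (x : ℂ))),
      ∃ lam : ℝ, μ = (lam : ℂ) ∧ |lam| ≤ |lam₁|)
    (hβ : lam₁ ^ 2 / 4 ≤ β) :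
    let Aβ : Matrix (Fin n ⊕ Fin n) (Fin n ⊕ Fin n) ℂ :=
      Matrix.fromBlocks (A.map (fun x => (x : ℂ))) (-(β : ℂ) • 1) 1 0
    ∀ μ ∈ spectrum ℂ Aβ, ‖μ‖ = Real.sqrt β :=
  stmt19_general n A lam₁ β hreal hβ
end
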